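/- In the cake instance constructed from a 3-Dimensional Matching instance (X, Y, Z, E): if there is no E' ⊆ E with |E'| = n' such that every element of X ∪ Y ∪ Z is a coordinate of some triple in E', then in every connected division some player's utility is at most 1/(2M). (Soundness direction of the reduction proving that maximizing egalitarian welfare with connected pieces is NP-hard and hard to approximate within any factor smaller than 2.) -/

import Mathlib

open MeasureTheory Set
open scoped ENNReal

/-- The set of coordinates of a triple. -/
def coords {α : Type*} [DecidableEq α] (t : α × α × α) : Finset α :=
  {t.1, t.2.1, t.2.2}

/-- `mult e w` is the number of triples in the list `e` having `w` as a
coordinate. -/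
def mult {α : Type*} [DecidableEq α] {M : ℕ} (e : Fin M → α × α × α) (w : α) : ℕ :=
  (Finset.univ.filter fun i => w ∈ coords (e i)).card

/-- Density of a uniform block: total value `c` spread uniformly over the
interval `(a, b)`. -/
noncomputable def unif (a b c : ℝ) : ℝ → ℝ≥0∞ :=
  (Ioo a b).indicator fun _ => ENNReal.ofReal (c / (b - a))

/-- The compensation-range density common to all non-separation players: total
value `(M - mw)/(2M²)` on each of the intervals `(2j+6/5, 2j+7/5)` and
`(2j+8/5, 2j+9/5)` of the `j`-th section (sections indexed from 0). -/
noncomputable def compDensity (M : ℕ) (mw : ℕ) : ℝ → ℝ≥0∞ := fun t =>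
  ∑ j : Fin M,
    (unif (2 * (j : ℝ) + 6 / 5) (2 * (j : ℝ) + 7 / 5)
        (((M : ℝ) - mw) / (2 * (M : ℝ) ^ 2)) t +
      unif (2 * (j : ℝ) + 8 / 5) (2 * (j : ℝ) + 9 / 5)
        (((M : ℝ) - mw) / (2 * (M : ℝ) ^ 2)) t)

/-- The players of the instance built from a 3DM instance: one triplet player
per `z ∈ Z`, `m_x - 1` ground-set players per `x ∈ X`, `m_y - 1` ground-set
players per `y ∈ Y`, and three separation players per triple. -/
abbrev DMPlayer {α : Type*} [DecidableEq α] (X Y Z : Finset α) {M : ℕ}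
    (e : Fin M → α × α × α) : Type _ :=
  {z // z ∈ Z} ⊕ ((Σ x : {x // x ∈ X}, Fin (mult e x.1 - 1)) ⊕
    ((Σ y : {y // y ∈ Y}, Fin (mult e y.1 - 1)) ⊕ (Fin M × Fin 3)))

/-- The value density function of each player in the reduction. -/
noncomputable def dmDensity {α : Type*} [DecidableEq α] (X Y Z : Finset α)
    {M : ℕ} (e : Fin M → α × α × α) : DMPlayer X Y Z e → ℝ → ℝ≥0∞
  | Sum.inl z => fun t =>
      (∑ i : Fin M,
        if z.1 ∈ coords (e i) then
          unif (2 * (i : ℝ)) (2 * (i : ℝ) + 1 / 4) (1 / (2 * (M : ℝ))) t +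
            unif (2 * (i : ℝ) + 3 / 4) (2 * (i : ℝ) + 1) (1 / (2 * (M : ℝ))) t
        else 0) + compDensity M (mult e z.1) t
  | Sum.inr (Sum.inl ⟨x, _⟩) => fun t =>
      (∑ i : Fin M,
        if x.1 ∈ coords (e i) then
          unif (2 * (i : ℝ) + 1 / 4) (2 * (i : ℝ) + 1 / 2) (1 / (M : ℝ)) t
        else 0) + compDensity M (mult e x.1) t
  | Sum.inr (Sum.inr (Sum.inl ⟨y, _⟩)) => fun t =>
      (∑ i : Fin M,
        if y.1 ∈ coords (e i) then
          unif (2 * (i : ℝ) + 1 / 2) (2 * (i : ℝ) + 3 / 4) (1 / (M : ℝ)) t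
        else 0) + compDensity M (mult e y.1) t
  | Sum.inr (Sum.inr (Sum.inr (i, k))) => fun t =>
      if k = 0 then unif (2 * (i : ℝ) + 1) (2 * (i : ℝ) + 6 / 5) 1 t
      else if k = 1 then unif (2 * (i : ℝ) + 7 / 5) (2 * (i : ℝ) + 8 / 5) 1 t
      else unif (2 * (i : ℝ) + 9 / 5) (2 * (i : ℝ) + 2) 1 t

/-- The valuation measure of each player in the reduction. -/
noncomputable def dmMeas {α : Type*} [DecidableEq α] (X Y Z : Finset α)
    {M : ℕ} (e : Fin M → α × α × α) (p : DMPlayer X Y Z e) : Measure ℝ :=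
  MeasureTheory.volume.withDensity (dmDensity X Y Z e p)

/-!
Suppose every player gets more than `1/(2M)`. Each separation player's piece meets her block, so
every other piece lies between two consecutive separation blocks. Between two blocks of the same
section it could only collect one compensation block, worth at most `1/(2M)`; hence it lies around
the first unit `[2j, 2j + 1]` of some section `j`. There a triplet player for `z` needs both of
her quarters, so `z ∈ e_j` and her piece covers the middle half of that unit; a ground-set player
for `x` needs more than half of her quarter, so `x ∈ e_j` and no two such players share a
section. The `n'` sections of the triplet players form `E'`. The `M - n'` ground-set players for
`X` then fill all other sections, and since `x` has only `m_x - 1` of them, one of its `m_x`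
triples lies in `E'`; likewise for `Y`.
-/

open Function

lemma Fin.eq_of_cast_lt_add_one {M : ℕ} {i j : Fin M} (hij : (i : ℝ) < j + 1)
    (hji : (j : ℝ) < i + 1) : i = j := by
  have h₁ : (i : ℕ) < j + 1 := by exact_mod_cast hij
  have h₂ : (j : ℕ) < i + 1 := by exact_mod_cast hji
  exact Fin.ext (by omega)

lemma Monotone.pairwise_disjoint_Ioo_castSucc_succ {β : Type*} [Preorder β] {n : ℕ}
    {c : Fin (n + 1) → β} (hc : Monotone c) :
    Pairwise (Disjoint on fun i : Fin n => Ioo (c i.castSucc) (c i.succ)) := by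
  intro i j hij
  rw [Function.onFun, Set.disjoint_left]
  rintro t ⟨hit, hti⟩ ⟨hjt, htj⟩
  rcases hij.lt_or_gt with h | h
  · exact lt_irrefl t (hti.trans ((hc (Fin.succ_le_castSucc_iff.2 h)).trans_lt hjt))
  · exact lt_irrefl t (htj.trans ((hc (Fin.succ_le_castSucc_iff.2 h)).trans_lt hit))

lemma ENNReal.ofReal_one_div_two_mul_le (M : ℕ) :
    ENNReal.ofReal (1 / (2 * M)) ≤ (2 * (M : ℝ≥0∞))⁻¹ := by
  rcases M.eq_zero_or_pos with rfl | hM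
  · simp
  · rw [one_div, ENNReal.ofReal_inv_of_pos (by positivity)]
    simp [ENNReal.ofReal_mul]

lemma injective_of_lt_measure_inter {Ω ι κ : Type*} [MeasurableSpace Ω] {μ : Measure Ω}
    {P : ι → Set Ω} (hP : Pairwise (Disjoint on P)) (hPm : ∀ q, MeasurableSet (P q))
    {J : κ → Set Ω} {c : ℝ≥0∞} (hJ : ∀ k, μ (J k) ≤ 2 * c) {b : ι → κ}
    (hb : ∀ q, c < μ (P q ∩ J (b q))) : Function.Injective b := by
  intro q q' hqq'
  by_contra hne
  have hq' := hb q'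
  rw [← hqq'] at hq'
  refine (hJ (b q)).not_gt ?_
  calc 2 * c = c + c := two_mul c
    _ < μ (J (b q) ∩ P q) + μ (J (b q) ∩ P q') := by
        rw [inter_comm, inter_comm _ (P q')]
        exact ENNReal.add_lt_add (hb q) hq'
    _ ≤ μ (J (b q) ∩ P q) + μ (J (b q) \ P q) := by
        gcongr
        exact fun t ht => ⟨ht.1, disjoint_right.1 (hP hne) ht.2⟩
    _ = μ (J (b q)) := measure_inter_add_sdiff _ (hPm q)

lemma unif_of_notMem {a b c t : ℝ} (ht : t ∉ Ioo a b) : unif a b c t = 0 :=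
  indicator_of_notMem ht _

lemma measurable_unif (a b c : ℝ) : Measurable (unif a b c) :=
  measurable_const.indicator measurableSet_Ioo

lemma setLIntegral_unif (a b c : ℝ) (S : Set ℝ) :
    ∫⁻ t in S, unif a b c t = ENNReal.ofReal (c / (b - a)) * volume (S ∩ Ioo a b) := by
  rw [unif, lintegral_indicator measurableSet_Ioo, setLIntegral_const,
    Measure.restrict_apply measurableSet_Ioo, inter_comm]

lemma setLIntegral_unif_le {a b : ℝ} (hab : a < b) (c : ℝ) (S : Set ℝ) :
    ∫⁻ t in S, unif a b c t ≤ ENNReal.ofReal c := by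
  calc ∫⁻ t in S, unif a b c t ≤ ENNReal.ofReal (c / (b - a)) * ENNReal.ofReal (b - a) := by
        rw [setLIntegral_unif, ← Real.volume_Ioo]
        gcongr
        exact inter_subset_right
    _ = ENNReal.ofReal c := by
        rw [← ENNReal.ofReal_mul' (sub_nonneg.2 hab.le),
          div_mul_cancel₀ _ (sub_ne_zero.2 hab.ne')]

lemma setLIntegral_unif_eq_zero {a b c : ℝ} {S : Set ℝ} (h : S ∩ Ioo a b = ∅) :
    ∫⁻ t in S, unif a b c t = 0 := by
  rw [setLIntegral_unif, h, measure_empty, mul_zero]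

section Sections

variable {M : ℕ}

/-- Section `j` of the cake is `[2j, 2j + 2]`. Its core contains the blocks of the triplet and
ground-set players, `(2j, 2j + 1)`, and reaches into the separation blocks on either side; its
gap holds the separation and compensation blocks. -/
abbrev sectionCore (j : Fin M) : Set ℝ := Ioo (2 * (j : ℝ) - 1 / 5) (2 * j + 6 / 5)

abbrev sectionGap (j : Fin M) : Set ℝ := Ioo (2 * (j : ℝ) + 1) (2 * j + 2)

lemma unif_eq_zero_of_mem_core {i j : Fin M} (hij : i ≠ j) {a b c t : ℝ}
    (ha : 2 * (i : ℝ) ≤ a) (hb : b ≤ 2 * i + 1) (ht : t ∈ sectionCore j) :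
    unif a b c t = 0 :=
  unif_of_notMem fun h => hij <| Fin.eq_of_cast_lt_add_one
    (by linarith [h.1, ht.2]) (by linarith [h.2, ht.1])

lemma unif_eq_zero_of_mem_gap {i j : Fin M} {a b c t : ℝ} (ha : 2 * (i : ℝ) ≤ a)
    (hb : b ≤ 2 * i + 1) (ht : t ∈ sectionGap j) : unif a b c t = 0 := by
  refine unif_of_notMem fun h => ?_
  have hij : i = j :=
    Fin.eq_of_cast_lt_add_one (by linarith [h.1, ht.2]) (by linarith [h.2, ht.1])
  rw [hij] at hb
  linarith [h.2, ht.1]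

lemma compDensity_eq_zero_of_mem_core {m : ℕ} {j : Fin M} {t : ℝ}
    (ht : t ∈ sectionCore j) : compDensity M m t = 0 := by
  refine Finset.sum_eq_zero fun i _ => ?_
  have hi : t ∉ Ioo (2 * (i : ℝ) + 6 / 5) (2 * i + 9 / 5) := fun h => by
    have hij : i = j :=
      Fin.eq_of_cast_lt_add_one (by linarith [h.1, ht.2]) (by linarith [h.2, ht.1])
    rw [hij] at h
    linarith [h.1, ht.2]
  rw [unif_of_notMem fun h => hi ⟨h.1, by linarith [h.2]⟩,
    unif_of_notMem fun h => hi ⟨by linarith [h.1], h.2⟩, add_zero]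

lemma compDensity_eqOn_gap (m : ℕ) (j : Fin M) :
    EqOn (compDensity M m)
      (fun t => unif (2 * j + 6 / 5) (2 * j + 7 / 5) (((M : ℝ) - m) / (2 * (M : ℝ) ^ 2)) t +
        unif (2 * j + 8 / 5) (2 * j + 9 / 5) (((M : ℝ) - m) / (2 * (M : ℝ) ^ 2)) t)
      (sectionGap j) := by
  intro t ht
  refine Finset.sum_eq_single j (fun i _ hij => ?_) (by simp)
  have hi : t ∉ Ioo (2 * (i : ℝ) + 6 / 5) (2 * i + 9 / 5) := fun h =>
    hij (Fin.eq_of_cast_lt_add_one (by linarith [h.1, ht.2]) (by linarith [h.2, ht.1]))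
  rw [unif_of_notMem fun h => hi ⟨h.1, by linarith [h.2]⟩,
    unif_of_notMem fun h => hi ⟨by linarith [h.1], h.2⟩, add_zero]

lemma compWeight_le {m : ℕ} (hM : 0 < M) :
    ((M : ℝ) - m) / (2 * (M : ℝ) ^ 2) ≤ 1 / (2 * M) := by
  rw [div_le_div_iff₀ (by positivity) (by positivity)]
  nlinarith [(m.cast_nonneg : (0 : ℝ) ≤ m), (Nat.cast_pos.2 hM : (0 : ℝ) < M)]

noncomputable def sepOffset : Fin 3 → ℝ := ![1, 7 / 5, 9 / 5]

lemma exists_window {l r : ℝ} (hl : 0 ≤ l) (hr : r ≤ 2 * M) (hlr : l < r)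
    {pt : Fin M × Fin 3 → ℝ}
    (hpt : ∀ (i : Fin M) (k : Fin 3),
      pt (i, k) ∈ Ioo (2 * (i : ℝ) + sepOffset k) (2 * i + sepOffset k + 1 / 5))
    (havoid : ∀ s, pt s ∉ Ioo l r) :
    ∃ j : Fin M, Ioo l r ⊆ sectionCore j ∨
      Ioo l r ⊆ Ioo (2 * (j : ℝ) + 1) (2 * j + 8 / 5) ∨
      Ioo l r ⊆ Ioo (2 * (j : ℝ) + 7 / 5) (2 * j + 2) := by
  have hbelow : ∀ (i : Fin M) (k : Fin 3), l < 2 * (i : ℝ) + sepOffset k →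
      r < 2 * (i : ℝ) + sepOffset k + 1 / 5 := fun i k h => by
    have := hpt i k
    by_contra! h'
    exact havoid (i, k) ⟨by linarith [this.1], by linarith [this.2]⟩
  -- `l` lies in section `n`, i.e. in `[2n, 2n + 2)`
  set n := ⌊l / 2⌋₊
  have hn : n < M := (Nat.floor_lt (by positivity)).2 (by linarith)
  have hnl : 2 * (n : ℝ) ≤ l := by linarith [Nat.floor_le (a := l / 2) (by positivity)]
  have hln : l < 2 * (n : ℝ) + 2 := by linarith [Nat.lt_floor_add_one (l / 2)]
  have h₀ := hbelow ⟨n, hn⟩ 0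
  have h₁ := hbelow ⟨n, hn⟩ 1
  have h₂ := hbelow ⟨n, hn⟩ 2
  simp only [sepOffset, Fin.isValue, Matrix.cons_val] at h₀ h₁ h₂
  rcases lt_or_ge l (2 * n + 1) with hl₀ | hl₀
  · exact ⟨⟨n, hn⟩, .inl <| Ioo_subset_Ioo (by rw [Fin.val_mk]; linarith)
      (by rw [Fin.val_mk]; linarith [h₀ hl₀])⟩
  rcases lt_or_ge l (2 * n + 7 / 5) with hl₁ | hl₁
  · exact ⟨⟨n, hn⟩, .inr <| .inl <| Ioo_subset_Ioo (by rw [Fin.val_mk]; linarith)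
      (by rw [Fin.val_mk]; linarith [h₁ hl₁])⟩
  rcases lt_or_ge l (2 * n + 9 / 5) with hl₂ | hl₂
  · exact ⟨⟨n, hn⟩, .inr <| .inr <| Ioo_subset_Ioo (by rw [Fin.val_mk]; linarith)
      (by rw [Fin.val_mk]; linarith [h₂ hl₂])⟩
  rcases lt_or_ge (n + 1) M with hn₁ | hn₁
  · have h₃ := hbelow ⟨n + 1, hn₁⟩ 0
    simp only [sepOffset, Fin.isValue, Matrix.cons_val, Nat.cast_add, Nat.cast_one] at h₃
    exact ⟨⟨n + 1, hn₁⟩, .inl <| Ioo_subset_Ioo (by push_cast; linarith)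
      (by push_cast; linarith [h₃ (by linarith)])⟩
  · have hM : (M : ℝ) ≤ n + 1 := by exact_mod_cast hn₁
    exact ⟨⟨n, hn⟩, .inr <| .inr <| Ioo_subset_Ioo (by rw [Fin.val_mk]; linarith)
      (by rw [Fin.val_mk]; linarith)⟩

end Sections

section Players

variable {α : Type*} [DecidableEq α] {X Y Z : Finset α} {M : ℕ} {e : Fin M → α × α × α}

noncomputable def groundDensity (e : Fin M → α × α × α) (w : α) (o o' : ℝ) :
    ℝ → ℝ≥0∞ :=
  fun t => (∑ i : Fin M,
    if w ∈ coords (e i) then unif (2 * (i : ℝ) + o) (2 * i + o') (1 / (M : ℝ)) t else 0) +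
      compDensity M (mult e w) t

lemma dmMeas_groundX (x : {x // x ∈ X}) (a : Fin (mult e x.1 - 1)) :
    dmMeas X Y Z e (Sum.inr (Sum.inl ⟨x, a⟩)) =
      volume.withDensity (groundDensity e x.1 (1 / 4) (1 / 2)) := rfl

lemma dmMeas_groundY (y : {y // y ∈ Y}) (a : Fin (mult e y.1 - 1)) :
    dmMeas X Y Z e (Sum.inr (Sum.inr (Sum.inl ⟨y, a⟩))) =
      volume.withDensity (groundDensity e y.1 (1 / 2) (3 / 4)) := rfl

lemma dmDensity_sep (i : Fin M) (k : Fin 3) :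
    dmDensity X Y Z e (Sum.inr (Sum.inr (Sum.inr (i, k)))) =
      unif (2 * i + sepOffset k) (2 * i + sepOffset k + 1 / 5) 1 := by
  fin_cases k <;> simp only [dmDensity, sepOffset] <;> norm_num <;> ring_nf

lemma nonempty_inter_of_dmMeas_sep_pos (i : Fin M) (k : Fin 3) {S : Set ℝ}
    (h : 0 < dmMeas X Y Z e (Sum.inr (Sum.inr (Sum.inr (i, k)))) S) :
    (S ∩ Ioo (2 * (i : ℝ) + sepOffset k) (2 * i + sepOffset k + 1 / 5)).Nonempty :=
  nonempty_of_measure_ne_zero fun h0 => h.ne' <| by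
    rw [dmMeas, withDensity_apply', dmDensity_sep, setLIntegral_unif, h0, mul_zero]

lemma exists_eqOn_compDensity (p : DMPlayer X Y Z e)
    (hp : ∀ s, p ≠ Sum.inr (Sum.inr (Sum.inr s))) :
    ∃ m : ℕ, ∀ j : Fin M,
      EqOn (dmDensity X Y Z e p) (compDensity M m) (sectionGap j) := by
  have ground : ∀ (w : α) {o o' : ℝ}, 0 ≤ o → o' ≤ 1 → ∀ j : Fin M,
      EqOn (groundDensity e w o o') (compDensity M (mult e w)) (sectionGap j) :=
    fun w o o' ho ho' j t ht => by
      rw [groundDensity, Finset.sum_eq_zero fun i _ => ?_, zero_add]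
      split_ifs
      · exact unif_eq_zero_of_mem_gap (by linarith) (by linarith) ht
      · rfl
  rcases p with z | ⟨x, a⟩ | ⟨y, a⟩ | s
  · refine ⟨mult e z.1, fun j t ht => ?_⟩
    simp only [dmDensity]
    rw [Finset.sum_eq_zero fun i _ => ?_, zero_add]
    split_ifs
    · rw [unif_eq_zero_of_mem_gap le_rfl (by linarith) ht,
        unif_eq_zero_of_mem_gap (by linarith) le_rfl ht, add_zero]
    · rfl
  · exact ⟨_, ground x.1 (by norm_num) (by norm_num)⟩
  · exact ⟨_, ground y.1 (by norm_num) (by norm_num)⟩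
  · exact absurd rfl (hp s)

lemma dmMeas_le_of_subset_gap {p : DMPlayer X Y Z e}
    (hp : ∀ s, p ≠ Sum.inr (Sum.inr (Sum.inr s))) {j : Fin M} {S : Set ℝ}
    (hS : MeasurableSet S)
    (hSj : S ⊆ Ioo (2 * (j : ℝ) + 1) (2 * j + 8 / 5) ∨
      S ⊆ Ioo (2 * (j : ℝ) + 7 / 5) (2 * j + 2)) :
    dmMeas X Y Z e p S ≤ ENNReal.ofReal (1 / (2 * M)) := by
  obtain ⟨m, hm⟩ := exists_eqOn_compDensity p hp
  set q := ((M : ℝ) - m) / (2 * (M : ℝ) ^ 2)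
  have hq : ENNReal.ofReal q ≤ ENNReal.ofReal (1 / (2 * M)) :=
    ENNReal.ofReal_le_ofReal (compWeight_le j.pos)
  have hcomp : EqOn (dmDensity X Y Z e p) (fun t => unif (2 * j + 6 / 5) (2 * j + 7 / 5) q t +
      unif (2 * j + 8 / 5) (2 * j + 9 / 5) q t) (sectionGap j) :=
    (hm j).trans (compDensity_eqOn_gap m j)
  obtain ⟨a, b, hab, hS_eq⟩ :
      ∃ a b : ℝ, a < b ∧ EqOn (dmDensity X Y Z e p) (unif a b q) S := by
    rcases hSj with hSj | hSj
    · refine ⟨2 * j + 6 / 5, 2 * j + 7 / 5, by linarith, fun t ht => ?_⟩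
      rw [hcomp (Ioo_subset_Ioo le_rfl (by linarith) (hSj ht))]
      dsimp only
      rw [unif_of_notMem (a := 2 * j + 8 / 5) fun h => by linarith [h.1, (hSj ht).2], add_zero]
    · refine ⟨2 * j + 8 / 5, 2 * j + 9 / 5, by linarith, fun t ht => ?_⟩
      rw [hcomp (Ioo_subset_Ioo (by linarith) le_rfl (hSj ht))]
      dsimp only
      rw [unif_of_notMem (a := 2 * j + 6 / 5) fun h => by linarith [h.2, (hSj ht).1], zero_add]
  rw [dmMeas, withDensity_apply', setLIntegral_congr_fun hS hS_eq]
  exact (setLIntegral_unif_le hab _ _).trans hq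

lemma dmDensity_inl_eqOn_core (z : {z // z ∈ Z}) (j : Fin M) :
    EqOn (dmDensity X Y Z e (Sum.inl z))
      (fun t => if z.1 ∈ coords (e j) then
        unif (2 * j) (2 * j + 1 / 4) (1 / (2 * M)) t +
          unif (2 * j + 3 / 4) (2 * j + 1) (1 / (2 * M)) t else 0)
      (sectionCore j) := fun t ht => by
  simp only [dmDensity]
  rw [compDensity_eq_zero_of_mem_core ht, add_zero]
  refine Finset.sum_eq_single j (fun i _ hij => ?_) (by simp)
  split_ifs
  · rw [unif_eq_zero_of_mem_core hij le_rfl (by linarith) ht,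
      unif_eq_zero_of_mem_core hij (by linarith) le_rfl ht, add_zero]
  · rfl

lemma groundDensity_eqOn_core (w : α) {o o' : ℝ} (ho : 0 ≤ o) (ho' : o' ≤ 1) (j : Fin M) :
    EqOn (groundDensity e w o o')
      (fun t => if w ∈ coords (e j) then unif (2 * j + o) (2 * j + o') (1 / M) t else 0)
      (sectionCore j) := fun t ht => by
  rw [groundDensity, compDensity_eq_zero_of_mem_core ht, add_zero]
  refine Finset.sum_eq_single j (fun i _ hij => ?_) (by simp)
  split_ifs
  · exact unif_eq_zero_of_mem_core hij (by linarith) (by linarith) ht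
  · rfl

lemma mem_coords_and_Icc_subset_of_lt_dmMeas_inl {z : {z // z ∈ Z}} {j : Fin M} {l r : ℝ}
    (hsub : Ioo l r ⊆ sectionCore j)
    (hval : ENNReal.ofReal (1 / (2 * M)) < dmMeas X Y Z e (Sum.inl z) (Ioo l r)) :
    z.1 ∈ coords (e j) ∧ Icc (2 * (j : ℝ) + 1 / 4) (2 * j + 3 / 4) ⊆ Ioo l r := by
  rw [dmMeas, withDensity_apply',
    setLIntegral_congr_fun measurableSet_Ioo ((dmDensity_inl_eqOn_core z j).mono hsub)] at hval
  split_ifs at hval with hz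
  · rw [lintegral_add_left (measurable_unif _ _ _)] at hval
    have hlow : (Ioo l r ∩ Ioo (2 * (j : ℝ)) (2 * j + 1 / 4)).Nonempty := by
      by_contra h
      rw [not_nonempty_iff_eq_empty] at h
      rw [setLIntegral_unif_eq_zero h, zero_add] at hval
      exact (setLIntegral_unif_le (by linarith) _ _).not_gt hval
    have hhigh : (Ioo l r ∩ Ioo (2 * (j : ℝ) + 3 / 4) (2 * j + 1)).Nonempty := by
      by_contra h
      rw [not_nonempty_iff_eq_empty] at h
      rw [setLIntegral_unif_eq_zero h, add_zero] at hval
      exact (setLIntegral_unif_le (by linarith) _ _).not_gt hval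
    obtain ⟨u, hu, hu'⟩ := hlow
    obtain ⟨v, hv, hv'⟩ := hhigh
    exact ⟨hz, Icc_subset_Ioo (by linarith [hu.1, hu'.2]) (by linarith [hv.2, hv'.1])⟩
  · simp at hval

lemma mem_coords_and_lt_volume_of_lt_groundDensity (w : α) {o o' : ℝ} (ho : 0 ≤ o)
    (ho' : o' ≤ 1) (hoo' : o' - o = 1 / 4) {j : Fin M} {l r : ℝ}
    (hsub : Ioo l r ⊆ sectionCore j)
    (hval : ENNReal.ofReal (1 / (2 * M)) <
      volume.withDensity (groundDensity e w o o') (Ioo l r)) :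
    w ∈ coords (e j) ∧
      ENNReal.ofReal (1 / 8) < volume (Ioo l r ∩ Ioo (2 * (j : ℝ) + o) (2 * j + o')) := by
  rw [withDensity_apply', setLIntegral_congr_fun measurableSet_Ioo
    ((groundDensity_eqOn_core w ho ho' j).mono hsub)] at hval
  split_ifs at hval with hw
  · refine ⟨hw, lt_of_not_ge fun hle => hval.not_ge ?_⟩
    rw [setLIntegral_unif, show 2 * (j : ℝ) + o' - (2 * j + o) = 1 / 4 by linarith]
    calc _ ≤ ENNReal.ofReal (1 / M / (1 / 4)) * ENNReal.ofReal (1 / 8) := by gcongr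
      _ = _ := by rw [← ENNReal.ofReal_mul (by positivity)]; congr 1; ring
  · simp at hval

end Players

section Matching

variable {α : Type*} [DecidableEq α] {X Y Z : Finset α}

lemma mem_coords_iff_fst (hXY : Disjoint X Y) (hXZ : Disjoint X Z) {t : α × α × α}
    (ht₂ : t.2.1 ∈ Y) (ht₃ : t.2.2 ∈ Z) {w : α} (hw : w ∈ X) :
    w ∈ coords t ↔ t.1 = w := by
  simp only [coords, Finset.mem_insert, Finset.mem_singleton]
  refine ⟨fun h => ?_, fun h => .inl h.symm⟩
  rcases h with h | h | h
  · exact h.symm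
  · exact absurd (h ▸ ht₂) (Finset.disjoint_left.1 hXY hw)
  · exact absurd (h ▸ ht₃) (Finset.disjoint_left.1 hXZ hw)

lemma mem_coords_iff_snd (hXY : Disjoint X Y) (hYZ : Disjoint Y Z) {t : α × α × α}
    (ht₁ : t.1 ∈ X) (ht₃ : t.2.2 ∈ Z) {w : α} (hw : w ∈ Y) :
    w ∈ coords t ↔ t.2.1 = w := by
  simp only [coords, Finset.mem_insert, Finset.mem_singleton]
  refine ⟨fun h => ?_, fun h => .inr (.inl h.symm)⟩
  rcases h with h | h | h
  · exact absurd (h ▸ ht₁) (Finset.disjoint_right.1 hXY hw)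
  · exact h.symm
  · exact absurd (h ▸ ht₃) (Finset.disjoint_left.1 hYZ hw)

lemma mem_coords_iff_thd (hXZ : Disjoint X Z) (hYZ : Disjoint Y Z) {t : α × α × α}
    (ht₁ : t.1 ∈ X) (ht₂ : t.2.1 ∈ Y) {w : α} (hw : w ∈ Z) :
    w ∈ coords t ↔ t.2.2 = w := by
  simp only [coords, Finset.mem_insert, Finset.mem_singleton]
  refine ⟨fun h => ?_, fun h => .inr (.inr h.symm)⟩
  rcases h with h | h | h
  · exact absurd (h ▸ ht₁) (Finset.disjoint_right.1 hXZ hw)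
  · exact absurd (h ▸ ht₂) (Finset.disjoint_right.1 hYZ hw)
  · exact h.symm

/-- `b` takes `∑ (m x - 1) = |ι| - |T|` distinct values outside `T`, so it fills the complement
of `T`; the fibre of `x`, of size `m x`, cannot fit into the `m x - 1` values `b ⟨x, _⟩`. -/
lemma exists_mem_eq_of_injective {ι : Type*} [Fintype ι] [DecidableEq ι] {f : ι → α}
    (hf : ∀ i, f i ∈ X) {m : α → ℕ}
    (hm : ∀ x ∈ X, m x = (Finset.univ.filter (f · = x)).card)
    (hm₁ : ∀ x ∈ X, 1 ≤ m x) {T : Finset ι} (hT : T.card = X.card)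
    {b : (Σ x : {x // x ∈ X}, Fin (m x - 1)) → ι} (hb : Function.Injective b)
    (hbf : ∀ q, f (b q) = q.1) (hbT : ∀ q, b q ∉ T) {x : α} (hx : x ∈ X) :
    ∃ i ∈ T, f i = x := by
  have hsum : ∑ x ∈ X, m x = Fintype.card ι := by
    rw [Finset.sum_congr rfl hm, ← Finset.card_eq_sum_card_fiberwise fun i _ => hf i,
      Finset.card_univ]
  have hcard : Tᶜ.card ≤ (Finset.univ.image b).card := by
    rw [Finset.card_image_of_injective _ hb, Finset.card_univ, Fintype.card_sigma,
      Finset.card_compl, hT, ← hsum]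
    simp only [Fintype.card_fin]
    rw [Finset.sum_coe_sort X (fun x => m x - 1), Finset.sum_tsub_distrib _ hm₁]
    simp
  have himage : Finset.univ.image b = Tᶜ :=
    Finset.eq_of_subset_of_card_le (fun i hi => by
      obtain ⟨q, -, rfl⟩ := Finset.mem_image.1 hi
      exact Finset.mem_compl.2 (hbT q)) hcard
  by_contra! hnone
  have hfiber :
      Finset.univ.filter (f · = x) ⊆ Finset.univ.image fun a => b ⟨⟨x, hx⟩, a⟩ := by
    intro i hi
    rw [Finset.mem_filter] at hi
    obtain ⟨⟨⟨x', hx'⟩, a⟩, -, rfl⟩ :=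
      Finset.mem_image.1 (himage ▸ Finset.mem_compl.2 fun hiT => hnone _ hiT hi.2)
    obtain rfl : x' = x := (hbf _).symm.trans hi.2
    exact Finset.mem_image_of_mem _ (Finset.mem_univ a)
  have := (Finset.card_le_card hfiber).trans Finset.card_image_le
  rw [← hm x hx, Finset.card_univ, Fintype.card_fin, Subtype.coe_mk] at this
  have := hm₁ x hx
  omega

variable {M : ℕ} {e : Fin M → α × α × α}

lemma mult_eq_card_filter {f : α × α × α → α} {w : α}
    (h : ∀ i, w ∈ coords (e i) ↔ f (e i) = w) :
    mult e w = (Finset.univ.filter fun i => f (e i) = w).card := by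
  simp only [mult, h]

theorem exists_cover_of_sections {n' : ℕ} (hX : X.card = n') (hY : Y.card = n')
    (hZ : Z.card = n') (hXY : Disjoint X Y) (hXZ : Disjoint X Z) (hYZ : Disjoint Y Z)
    (heX : ∀ i, (e i).1 ∈ X) (heY : ∀ i, (e i).2.1 ∈ Y) (heZ : ∀ i, (e i).2.2 ∈ Z)
    (hmult : ∀ w ∈ X ∪ Y ∪ Z, 1 ≤ mult e w)
    {secZ : {z // z ∈ Z} → Fin M} (hsecZ : Function.Injective secZ)
    (hsecZ_e : ∀ z, z.1 ∈ coords (e (secZ z)))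
    {secX : (Σ x : {x // x ∈ X}, Fin (mult e x.1 - 1)) → Fin M}
    (hsecX : Function.Injective secX)
    (hsecX_e : ∀ q, q.1.1 ∈ coords (e (secX q))) (hsecXZ : ∀ q z, secX q ≠ secZ z)
    {secY : (Σ y : {y // y ∈ Y}, Fin (mult e y.1 - 1)) → Fin M}
    (hsecY : Function.Injective secY)
    (hsecY_e : ∀ q, q.1.1 ∈ coords (e (secY q))) (hsecYZ : ∀ q z, secY q ≠ secZ z) :
    ∃ E' : Finset (Fin M), E'.card = n' ∧
      ∀ w ∈ X ∪ Y ∪ Z, ∃ i ∈ E', w ∈ coords (e i) := by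
  have hT : (Finset.univ.image secZ).card = n' := by
    rw [Finset.card_image_of_injective _ hsecZ, Finset.card_univ, Fintype.card_coe, hZ]
  have hnotT : ∀ {j}, (∀ z, j ≠ secZ z) → j ∉ Finset.univ.image secZ := fun hj hjT => by
    obtain ⟨z, -, hz⟩ := Finset.mem_image.1 hjT
    exact hj z hz.symm
  refine ⟨Finset.univ.image secZ, hT, fun w hw => ?_⟩
  simp only [Finset.mem_union] at hw
  rcases hw with (hw | hw) | hw
  · have hcoord : ∀ {x}, x ∈ X → ∀ i, x ∈ coords (e i) ↔ (e i).1 = x :=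
      fun hx i => mem_coords_iff_fst hXY hXZ (heY i) (heZ i) hx
    obtain ⟨i, hi, rfl⟩ := exists_mem_eq_of_injective (f := fun i => (e i).1) heX (m := mult e)
      (fun x hx => mult_eq_card_filter (hcoord hx)) (fun x hx => hmult x (by simp [hx]))
      (hT.trans hX.symm) hsecX (fun q => (hcoord q.1.2 _).1 (hsecX_e q))
      (fun q => hnotT (hsecXZ q)) hw
    exact ⟨i, hi, by simp [coords]⟩
  · have hcoord : ∀ {y}, y ∈ Y → ∀ i, y ∈ coords (e i) ↔ (e i).2.1 = y :=
      fun hy i => mem_coords_iff_snd hXY hYZ (heX i) (heZ i) hy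
    obtain ⟨i, hi, rfl⟩ := exists_mem_eq_of_injective (f := fun i => (e i).2.1) heY
      (m := mult e)
      (fun y hy => mult_eq_card_filter (f := fun t => t.2.1) (hcoord hy))
      (fun y hy => hmult y (by simp [hy]))
      (hT.trans hY.symm) hsecY (fun q => (hcoord q.1.2 _).1 (hsecY_e q))
      (fun q => hnotT (hsecYZ q)) hw
    exact ⟨i, hi, by simp [coords]⟩
  · exact ⟨secZ ⟨w, hw⟩, Finset.mem_image_of_mem _ (Finset.mem_univ _), hsecZ_e _⟩

end Matching

section Soundness

variable {α : Type*} [DecidableEq α] {X Y Z : Finset α} {M : ℕ} {e : Fin M → α × α × α}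

structure IsRichDivision (l r : DMPlayer X Y Z e → ℝ) : Prop where
  nonneg : ∀ p, 0 ≤ l p
  le_two_mul : ∀ p, r p ≤ 2 * M
  disjoint : Pairwise (Disjoint on fun p => Ioo (l p) (r p))
  lt_dmMeas : ∀ p, ENNReal.ofReal (1 / (2 * M)) < dmMeas X Y Z e p (Ioo (l p) (r p))

namespace IsRichDivision

variable {l r : DMPlayer X Y Z e → ℝ}

lemma exists_core (h : IsRichDivision l r) {p : DMPlayer X Y Z e}
    (hp : ∀ s, p ≠ Sum.inr (Sum.inr (Sum.inr s))) :
    ∃ j : Fin M, Ioo (l p) (r p) ⊆ sectionCore j := by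
  choose pt hpt using fun s : Fin M × Fin 3 =>
    nonempty_inter_of_dmMeas_sep_pos s.1 s.2 (pos_of_gt (h.lt_dmMeas _))
  have hlr : l p < r p := by
    by_contra! hrl
    simpa [Ioo_eq_empty_of_le hrl] using h.lt_dmMeas p
  obtain ⟨j, hj | hj⟩ := exists_window (h.nonneg p) (h.le_two_mul p) hlr
    (fun i k => (hpt (i, k)).2) (fun s => disjoint_left.1 (h.disjoint (hp s).symm) (hpt s).1)
  · exact ⟨j, hj⟩
  · exact absurd (dmMeas_le_of_subset_gap hp measurableSet_Ioo hj) (h.lt_dmMeas p).not_ge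

lemma exists_triplet_section (h : IsRichDivision l r) (z : {z // z ∈ Z}) :
    ∃ j : Fin M, z.1 ∈ coords (e j) ∧
      Icc (2 * (j : ℝ) + 1 / 4) (2 * j + 3 / 4) ⊆ Ioo (l (.inl z)) (r (.inl z)) := by
  obtain ⟨j, hj⟩ := h.exists_core (p := .inl z) (by simp)
  exact ⟨j, mem_coords_and_Icc_subset_of_lt_dmMeas_inl hj (h.lt_dmMeas _)⟩

lemma exists_groundX_section (h : IsRichDivision l r)
    (q : Σ x : {x // x ∈ X}, Fin (mult e x.1 - 1)) :
    ∃ j : Fin M, q.1.1 ∈ coords (e j) ∧ ENNReal.ofReal (1 / 8) <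
      volume (Ioo (l (.inr (.inl q))) (r (.inr (.inl q))) ∩
        Ioo (2 * (j : ℝ) + 1 / 4) (2 * j + 1 / 2)) := by
  obtain ⟨j, hj⟩ := h.exists_core (p := .inr (.inl q)) (by simp)
  obtain ⟨x, a⟩ := q
  exact ⟨j, mem_coords_and_lt_volume_of_lt_groundDensity _ (by norm_num) (by norm_num)
    (by norm_num) hj (dmMeas_groundX x a ▸ h.lt_dmMeas _)⟩

lemma exists_groundY_section (h : IsRichDivision l r)
    (q : Σ y : {y // y ∈ Y}, Fin (mult e y.1 - 1)) :
    ∃ j : Fin M, q.1.1 ∈ coords (e j) ∧ ENNReal.ofReal (1 / 8) <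
      volume (Ioo (l (.inr (.inr (.inl q)))) (r (.inr (.inr (.inl q)))) ∩
        Ioo (2 * (j : ℝ) + 1 / 2) (2 * j + 3 / 4)) := by
  obtain ⟨j, hj⟩ := h.exists_core (p := .inr (.inr (.inl q))) (by simp)
  obtain ⟨y, a⟩ := q
  exact ⟨j, mem_coords_and_lt_volume_of_lt_groundDensity _ (by norm_num) (by norm_num)
    (by norm_num) hj (dmMeas_groundY y a ▸ h.lt_dmMeas _)⟩

theorem exists_cover (h : IsRichDivision l r) {n' : ℕ} (hX : X.card = n') (hY : Y.card = n')
    (hZ : Z.card = n') (hXY : Disjoint X Y) (hXZ : Disjoint X Z) (hYZ : Disjoint Y Z)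
    (heX : ∀ i, (e i).1 ∈ X) (heY : ∀ i, (e i).2.1 ∈ Y) (heZ : ∀ i, (e i).2.2 ∈ Z)
    (hmult : ∀ w ∈ X ∪ Y ∪ Z, 1 ≤ mult e w) :
    ∃ E' : Finset (Fin M), E'.card = n' ∧
      ∀ w ∈ X ∪ Y ∪ Z, ∃ i ∈ E', w ∈ coords (e i) := by
  choose secZ hsecZ_e hsecZ_sub using h.exists_triplet_section
  choose secX hsecX_e hsecX_vol using h.exists_groundX_section
  choose secY hsecY_e hsecY_vol using h.exists_groundY_section
  have hmid : ∀ z, 2 * (secZ z : ℝ) + 1 / 2 ∈ Ioo (l (.inl z)) (r (.inl z)) :=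
    fun z => hsecZ_sub z ⟨by linarith, by linarith⟩
  have hsecZ : Function.Injective secZ := fun z z' hzz' => by
    by_contra hne
    refine disjoint_left.1 (h.disjoint (Sum.inl_injective.ne hne)) (hmid z) ?_
    rw [hzz']
    exact hmid z'
  have havoid : ∀ {p : DMPlayer X Y Z e}, (∀ z, p ≠ .inl z) → ∀ {j : Fin M} {a b : ℝ},
      2 * (j : ℝ) + 1 / 4 ≤ a → b ≤ 2 * j + 3 / 4 →
      ENNReal.ofReal (1 / 8) < volume (Ioo (l p) (r p) ∩ Ioo a b) → ∀ z, j ≠ secZ z := by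
    intro p hp j a b ha hb hvol z hjz
    subst hjz
    obtain ⟨t, htp, hta⟩ := nonempty_of_measure_ne_zero (ne_bot_of_gt hvol)
    exact disjoint_left.1 (h.disjoint (hp z)) htp
      (hsecZ_sub z ⟨by linarith [hta.1], by linarith [hta.2]⟩)
  have hquarter :
      ∀ a b : ℝ, b = a + 1 / 4 → volume (Ioo a b) ≤ 2 * ENNReal.ofReal (1 / 8) := by
    rintro a b rfl
    rw [Real.volume_Ioo, ← ENNReal.ofReal_ofNat 2, ← ENNReal.ofReal_mul (by norm_num)]
    norm_num
  have hsecX : Function.Injective secX := injective_of_lt_measure_inter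
    (h.disjoint.comp_of_injective (Sum.inr_injective.comp Sum.inl_injective))
    (fun _ => measurableSet_Ioo) (J := fun j : Fin M => Ioo (2 * (j : ℝ) + 1 / 4) (2 * j + 1 / 2))
    (fun _ => hquarter _ _ (by ring)) hsecX_vol
  have hsecY : Function.Injective secY := injective_of_lt_measure_inter
    (h.disjoint.comp_of_injective
      (Sum.inr_injective.comp (Sum.inr_injective.comp Sum.inl_injective)))
    (fun _ => measurableSet_Ioo) (J := fun j : Fin M => Ioo (2 * (j : ℝ) + 1 / 2) (2 * j + 3 / 4))
    (fun _ => hquarter _ _ (by ring)) hsecY_vol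
  exact exists_cover_of_sections hX hY hZ hXY hXZ hYZ heX heY heZ hmult hsecZ hsecZ_e
    hsecX hsecX_e (fun q => havoid (by simp) le_rfl (by linarith) (hsecX_vol q))
    hsecY hsecY_e (fun q => havoid (by simp) (by linarith) le_rfl (hsecY_vol q))

end IsRichDivision

end Soundness

theorem stmt_2_general {α : Type*} [DecidableEq α] (X Y Z : Finset α) (n' M : ℕ)
    (hX : X.card = n') (hY : Y.card = n') (hZ : Z.card = n')
    (hXY : Disjoint X Y) (hXZ : Disjoint X Z) (hYZ : Disjoint Y Z)
    (e : Fin M → α × α × α)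
    (heX : ∀ i, (e i).1 ∈ X) (heY : ∀ i, (e i).2.1 ∈ Y) (heZ : ∀ i, (e i).2.2 ∈ Z)
    (hmult : ∀ w ∈ X ∪ Y ∪ Z, 1 ≤ mult e w)
    (hnocover : ¬∃ E' : Finset (Fin M), E'.card = n' ∧
      ∀ w ∈ X ∪ Y ∪ Z, ∃ i ∈ E', w ∈ coords (e i)) :
    ∀ (c : Fin (Fintype.card (DMPlayer X Y Z e) + 1) → ℝ)
      (σ : Fin (Fintype.card (DMPlayer X Y Z e)) ≃ DMPlayer X Y Z e),
      Monotone c → c 0 = 0 → c (Fin.last _) = 2 * M →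
      ∃ p : DMPlayer X Y Z e,
        dmMeas X Y Z e p (Ioo (c (σ.symm p).castSucc) (c (σ.symm p).succ)) ≤
          (2 * (M : ℝ≥0∞))⁻¹ := by
  intro c σ hc hc0 hcM
  by_contra! hlarge
  refine hnocover (IsRichDivision.exists_cover (l := fun p => c (σ.symm p).castSucc)
    (r := fun p => c (σ.symm p).succ) ?_ hX hY hZ hXY hXZ hYZ heX heY heZ hmult)
  exact
    { nonneg := fun p => hc0 ▸ hc (Fin.zero_le _)
      le_two_mul := fun p => hcM ▸ hc (Fin.le_last _)
      disjoint := hc.pairwise_disjoint_Ioo_castSucc_succ.comp_of_injective σ.symm.injective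
      lt_dmMeas := fun p => (ENNReal.ofReal_one_div_two_mul_le M).trans_lt (hlarge p) }

/-- soundness of the 3DM reduction, Theorem 2: if the 3DM
instance has no perfect matching `E' ⊆ E`, `|E'| = n'`, covering `X ∪ Y ∪ Z`,
then in every connected division of the constructed cake instance some player's
utility is at most `1/(2M)`. -/
theorem stmt_2 {α : Type*} [DecidableEq α] (X Y Z : Finset α) (n' M : ℕ)
    (hM : 1 ≤ M) (hX : X.card = n') (hY : Y.card = n') (hZ : Z.card = n')
    (hXY : Disjoint X Y) (hXZ : Disjoint X Z) (hYZ : Disjoint Y Z)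
    (e : Fin M → α × α × α) (he : Function.Injective e)
    (heX : ∀ i, (e i).1 ∈ X) (heY : ∀ i, (e i).2.1 ∈ Y) (heZ : ∀ i, (e i).2.2 ∈ Z)
    (hmult : ∀ w ∈ X ∪ Y ∪ Z, 1 ≤ mult e w)
    (hnocover : ¬∃ E' : Finset (Fin M), E'.card = n' ∧
      ∀ w ∈ X ∪ Y ∪ Z, ∃ i ∈ E', w ∈ coords (e i)) :
    ∀ (c : Fin (Fintype.card (DMPlayer X Y Z e) + 1) → ℝ)
      (σ : Fin (Fintype.card (DMPlayer X Y Z e)) ≃ DMPlayer X Y Z e),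
      Monotone c → c 0 = 0 → c (Fin.last _) = 2 * M →
      ∃ p : DMPlayer X Y Z e,
        dmMeas X Y Z e p (Ioo (c (σ.symm p).castSucc) (c (σ.symm p).succ)) ≤
          (2 * (M : ℝ≥0∞))⁻¹ :=
  stmt_2_general X Y Z n' M hX hY hZ hXY hXZ hYZ e heX heY heZ hmult hnocover
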